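/- For every u ∈ {1,…,d−1}, the matrix σ_x^{(0u)} + Σ_{k=0, k≠u}^{d−1} σ_x^{(ku)} belongs to 𝔪, the real Lie subalgebra of d×d complex matrices generated by 𝔥 ∪ 𝔥'. -/

import Mathlib

open scoped Matrix
open Finset

attribute [local instance] LieRing.ofAssociativeRing

/-- The d×d Fourier matrix V with entries V_{jk} = ω^{jk}/√d, ω = exp(2πi/d). -/
noncomputable def fourierV (d : ℕ) : Matrix (Fin d) (Fin d) ℂ :=
  Matrix.of fun j k =>
    Complex.exp (2 * Real.pi * Complex.I / d) ^ ((j : ℕ) * (k : ℕ)) / (Real.sqrt d : ℂ)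

/-- σ_x^{(jk)} = i(E_{jk} + E_{kj}). -/
noncomputable def sigmaX {d : ℕ} (j k : Fin d) : Matrix (Fin d) (Fin d) ℂ :=
  Complex.I • (Matrix.single j k 1 + Matrix.single k j 1)

/-- 𝔥: the diagonal matrices diag(iα₀,…,iα_{d−1}) with real αⱼ. -/
def diagLie (d : ℕ) : Set (Matrix (Fin d) (Fin d) ℂ) :=
  {A | ∃ α : Fin d → ℝ, A = Matrix.diagonal fun j => Complex.I * (α j : ℂ)}

/-- 𝔥' = V 𝔥 V⁻¹. -/
noncomputable def diagLieConj (d : ℕ) : Set (Matrix (Fin d) (Fin d) ℂ) :=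
  {A | ∃ B ∈ diagLie d, A = fourierV d * B * (fourierV d)⁻¹}

/-!
Write `J` for the matrix all of whose entries are `i`. The columns of `V` other than the `0`th
sum to zero, so `J V = V diag(i d, 0, …, 0)`, i.e. `J ∈ 𝔥'`. Bracketing with `diag a` multiplies
the `(j, k)` entry by `a_j - a_k`. For `a = i e_u` and `b = i (e_0 - e_u)` the double bracket
`⁅diag a, ⁅diag b, J⁆⁆` therefore multiplies the `(j, k)` entry of `J` by `(a_j - a_k)(b_j - b_k)`,
which vanishes off row and column `u`, is `2` at `(0, u)` and `(u, 0)`, and is `1` at the other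
off-diagonal entries of row and column `u`.
-/

namespace Matrix

variable {n R : Type*} [Fintype n] [DecidableEq n] [CommRing R]

lemma lie_diagonal_apply (v : n → R) (M : Matrix n n R) (i j : n) :
    ⁅diagonal v, M⁆ i j = (v i - v j) * M i j := by
  simp only [Ring.lie_def, sub_apply, diagonal_mul, mul_diagonal]
  ring

end Matrix

lemma IsPrimitiveRoot.sum_range_pow_mul_eq_zero {R : Type*} [CommRing R] [IsDomain R] {ζ : R}
    {d k : ℕ} (hζ : IsPrimitiveRoot ζ d) (hk : ¬d ∣ k) : ∑ j ∈ range d, ζ ^ (j * k) = 0 := by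
  have hζk : 1 - ζ ^ k ≠ 0 := sub_ne_zero.2 fun h => hk ((hζ.pow_eq_one_iff_dvd k).1 h.symm)
  have hsum : (1 - ζ ^ k) * ∑ j ∈ range d, (ζ ^ k) ^ j = 0 := by
    rw [mul_neg_geom_sum, ← pow_mul, pow_mul', hζ.pow_eq_one, one_pow, sub_self]
  simpa only [← pow_mul, mul_comm k] using eq_zero_of_ne_zero_of_mul_left_eq_zero hζk hsum

open Complex Matrix

section Fourier

variable (d : ℕ)

lemma fourierV_eq_smul_vandermonde : fourierV d =
    (Real.sqrt d : ℂ)⁻¹ • vandermonde fun j : Fin d => exp (2 * Real.pi * I / d) ^ (j : ℕ) := by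
  ext j k
  simp [fourierV, ← pow_mul, div_eq_inv_mul]

variable [NeZero d]

lemma isUnit_det_fourierV : IsUnit (fourierV d).det := by
  have hsqrt : (Real.sqrt d : ℂ) ≠ 0 := by
    exact_mod_cast (Real.sqrt_pos.2 (Nat.cast_pos.2 (Nat.pos_of_neZero d))).ne'
  rw [isUnit_iff_ne_zero, fourierV_eq_smul_vandermonde, det_smul]
  refine mul_ne_zero (pow_ne_zero _ (inv_ne_zero hsqrt)) (det_vandermonde_ne_zero_iff.2 ?_)
  intro i j h
  exact Fin.ext ((isPrimitiveRoot_exp d (NeZero.ne d)).pow_inj i.isLt j.isLt h)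

lemma sum_fourierV_apply (k : Fin d) :
    ∑ j, fourierV d j k = if k = 0 then d / (Real.sqrt d : ℂ) else 0 := by
  simp only [fourierV, of_apply, ← sum_div]
  rw [Fin.sum_univ_eq_sum_range (fun j => exp (2 * Real.pi * I / d) ^ (j * k)) d]
  split_ifs with hk
  · simp [hk]
  · rw [(isPrimitiveRoot_exp d (NeZero.ne d)).sum_range_pow_mul_eq_zero, zero_div]
    exact Nat.not_dvd_of_pos_of_lt (Nat.pos_of_ne_zero (Fin.val_ne_iff.2 hk)) k.isLt

lemma of_const_I_mul_fourierV :
    of (fun _ _ : Fin d => I) * fourierV d =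
      fourierV d * diagonal fun k => I * ((Pi.single 0 (d : ℝ) : Fin d → ℝ) k : ℂ) := by
  ext j k
  rw [mul_apply, mul_diagonal]
  simp only [of_apply, ← mul_sum, sum_fourierV_apply]
  rcases eq_or_ne k 0 with rfl | hk
  · simp [fourierV]
    ring
  · simp [hk]

lemma of_const_I_mem_diagLieConj : of (fun _ _ : Fin d => I) ∈ diagLieConj d := by
  refine ⟨_, ⟨Pi.single 0 (d : ℝ), rfl⟩, ?_⟩
  rw [← of_const_I_mul_fourierV, mul_nonsing_inv_cancel_right _ _ (isUnit_det_fourierV d)]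

end Fourier

lemma sigmaX_apply {d : ℕ} (k l i j : Fin d) :
    sigmaX k l i j = I * ((if i = k ∧ j = l then 1 else 0) + (if i = l ∧ j = k then 1 else 0)) := by
  simp [sigmaX, single_apply, eq_comm]

lemma sum_sigmaX_apply {d : ℕ} (u i j : Fin d) :
    (∑ k ∈ univ \ {u}, sigmaX k u) i j =
      I * ((if i ≠ u ∧ j = u then 1 else 0) + (if i = u ∧ j ≠ u then 1 else 0)) := by
  simp only [Matrix.sum_apply, sigmaX_apply, ← mul_sum, sum_add_distrib, ite_and]
  simp [eq_comm]

lemma sigmaX_add_sum_sigmaX_eq_lie_lie {d : ℕ} [NeZero d] (u : Fin d) (hu : u ≠ 0) :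
    sigmaX 0 u + ∑ k ∈ univ \ {u}, sigmaX k u =
      ⁅diagonal fun j => I * ((Pi.single u 1 : Fin d → ℝ) j : ℂ),
        ⁅diagonal fun j => I * ((Pi.single 0 1 - Pi.single u 1 : Fin d → ℝ) j : ℂ),
          of fun _ _ => I⁆⁆ := by
  ext i j
  rw [lie_diagonal_apply, lie_diagonal_apply, Matrix.add_apply, sigmaX_apply, sum_sigmaX_apply]
  simp only [Pi.sub_apply, Pi.single_apply, of_apply]
  by_cases hi : i = u <;> by_cases hj : j = u <;> by_cases hi0 : i = 0 <;> by_cases hj0 : j = 0 <;>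
    simp [hi, hj, hi0, hj0, hu, hu.symm] <;>
    linear_combination 2 * I * I_mul_I

/-- For every u ∈ {1,…,d−1}, σ_x^{(0u)} + Σ_{k=0, k≠u}^{d−1} σ_x^{(ku)} belongs to the
    real Lie subalgebra 𝔪 generated by 𝔥 ∪ 𝔥'. -/
theorem sigmaX_combo_mem_lieSpan (d : ℕ) [NeZero d] (u : Fin d) (hu : 1 ≤ (u : ℕ)) :
    sigmaX (0 : Fin d) u + ∑ k ∈ univ \ {u}, sigmaX k u ∈
      LieSubalgebra.lieSpan ℝ (Matrix (Fin d) (Fin d) ℂ) (diagLie d ∪ diagLieConj d) := by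
  rw [sigmaX_add_sum_sigmaX_eq_lie_lie u (Fin.pos_iff_ne_zero.1 hu)]
  refine LieSubalgebra.lie_mem _ (LieSubalgebra.subset_lieSpan (Or.inl ⟨_, rfl⟩)) ?_
  refine LieSubalgebra.lie_mem _ (LieSubalgebra.subset_lieSpan (Or.inl ⟨_, rfl⟩)) ?_
  exact LieSubalgebra.subset_lieSpan (Or.inr (of_const_I_mem_diagLieConj d))
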